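/- arXiv:1605.00933 — 3 statements merged into one kernel-verified Lean document; each statement's English description precedes it below -/
import Mathlib

section
/- Let f : ℝ^d → ℝ be twice continuously differentiable with μ·I ⪯ ∇²f(x) ⪯ L·I for all x, for constants 0 < μ < L < ∞ (so f is μ-strongly convex and has a unique minimizer x* with optimal value f* = f(x*)). Fix constants 0 < Γ ≤ Δ and a stepsize 0 < ε < 2Γ/(L·Δ²). Let (A(t))_{t≥0} be any sequence of symmetric d×d matrices satisfying Γ·I ⪯ A(t) ⪯ Δ·I for all t, and define x(t+1) = x(t) − ε·A(t)·∇f(x(t)). Then, with c := 1 − (2μΓε − μLΔ²ε²), one has 0 < c < 1 and f(x(t)) − f* ≤ c^t·(f(x(0)) − f*) for all t ≥ 0. -/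
/-!
Restricting `f` to a line, the Hessian bounds give the quadratic sandwich
`f p + ⟪∇f p, v⟫ + μ/2 ‖v‖² ≤ f (p + v) ≤ f p + ⟪∇f p, v⟫ + L/2 ‖v‖²`.
Completing the square in the lower bound gives the Polyak–Łojasiewicz inequality
`2μ (f p - f q) ≤ ‖∇f p‖²`. The upper bound at `v = -ε A ∇f p`, together with
`⟪A g, g⟫ ≥ Γ ‖g‖²` and `‖A g‖ ≤ Δ ‖g‖`, gives the decrease
`f (p - ε A ∇f p) ≤ f p - (εΓ - LΔ²ε²/2) ‖∇f p‖²`, and the two combine into the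
one-step contraction `f x(t+1) - f q ≤ c (f x(t) - f q)`.
-/

open RealInnerProductSpace

theorem add_add_half_le_of_le_deriv_deriv {φ φ' φ'' : ℝ → ℝ} {m : ℝ}
    (hφ : ∀ s, HasDerivAt φ (φ' s) s) (hφ' : ∀ s, HasDerivAt φ' (φ'' s) s)
    (hm : ∀ s, m ≤ φ'' s) : φ 0 + φ' 0 + m / 2 ≤ φ 1 := by
  have hψ : Monotone fun s => φ' s - m * s :=
    monotone_of_hasDerivAt_nonneg
      (fun s => by simpa only [mul_one] using (hφ' s).fun_sub ((hasDerivAt_id' s).const_mul m))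
      fun s => sub_nonneg.mpr (hm s)
  have hχ' : ∀ s, HasDerivAt (fun s => φ s - φ' 0 * s - m / 2 * s ^ 2)
      (φ' s - m * s - (φ' 0 - m * 0)) s := fun s =>
    (((hφ s).fun_sub ((hasDerivAt_id' s).const_mul (φ' 0))).fun_sub
      ((hasDerivAt_pow 2 s).const_mul (m / 2))).congr_deriv (by push_cast; ring)
  have hχ : MonotoneOn (fun s => φ s - φ' 0 * s - m / 2 * s ^ 2) (Set.Ici 0) :=
    monotoneOn_of_hasDerivWithinAt_nonneg (convex_Ici 0)
      (fun s _ => (hχ' s).continuousAt.continuousWithinAt)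
      (fun s _ => (hχ' s).hasDerivWithinAt)
      fun s hs => sub_nonneg.mpr (hψ (interior_subset hs : s ∈ Set.Ici 0))
  have h01 := hχ Set.self_mem_Ici (Set.mem_Ici.mpr zero_le_one) zero_le_one
  simp only [mul_zero, sub_zero, zero_pow two_ne_zero, mul_one, one_pow] at h01
  linarith

theorem le_add_add_half_of_deriv_deriv_le {φ φ' φ'' : ℝ → ℝ} {M : ℝ}
    (hφ : ∀ s, HasDerivAt φ (φ' s) s) (hφ' : ∀ s, HasDerivAt φ' (φ'' s) s)
    (hM : ∀ s, φ'' s ≤ M) : φ 1 ≤ φ 0 + φ' 0 + M / 2 := by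
  have := add_add_half_le_of_le_deriv_deriv (fun s => (hφ s).neg) (fun s => (hφ' s).neg)
    (fun s => neg_le_neg (hM s))
  simp only [Pi.neg_apply] at this
  linarith

section HessianBounds

variable {E : Type*} [NormedAddCommGroup E] [InnerProductSpace ℝ E]

theorem hasDerivAt_comp_add_smul {F : Type*} [NormedAddCommGroup F] [NormedSpace ℝ F]
    {g : E → F} {p v : E} {s : ℝ} (hg : DifferentiableAt ℝ g (p + s • v)) :
    HasDerivAt (fun s : ℝ => g (p + s • v)) (fderiv ℝ g (p + s • v) v) s :=
  hg.hasFDerivAt.comp_hasDerivAt s <| by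
    simpa using ((hasDerivAt_id s).smul_const v).const_add p

variable [CompleteSpace E] {f : E → ℝ}

theorem ContDiff.differentiable_gradient (hf : ContDiff ℝ 2 f) :
    Differentiable ℝ (gradient f) := by
  change Differentiable ℝ ((InnerProductSpace.toDual ℝ E).symm ∘ fderiv ℝ f)
  exact ((InnerProductSpace.toDual ℝ E).symm.toContinuousLinearEquiv :
    _ ≃L[ℝ] _).differentiable.comp
    ((hf.fderiv_right one_add_one_eq_two.le).differentiable one_ne_zero)

theorem hasDerivAt_apply_add_smul {p v : E} {s : ℝ} (hf : DifferentiableAt ℝ f (p + s • v)) :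
    HasDerivAt (fun s => f (p + s • v)) ⟪gradient f (p + s • v), v⟫ s := by
  simpa only [inner_gradient_left] using hasDerivAt_comp_add_smul hf

theorem hasDerivAt_inner_gradient_add_smul {p v : E} {s : ℝ}
    (hg : DifferentiableAt ℝ (gradient f) (p + s • v)) :
    HasDerivAt (fun s => ⟪gradient f (p + s • v), v⟫)
      ⟪fderiv ℝ (gradient f) (p + s • v) v, v⟫ s := by
  simpa using (hasDerivAt_comp_add_smul hg).inner ℝ (hasDerivAt_const s v)

theorem add_inner_gradient_add_le_of_le_hessian (hf : Differentiable ℝ f)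
    (hg : Differentiable ℝ (gradient f)) {m : ℝ} {v : E}
    (hm : ∀ x, m * ‖v‖ ^ 2 ≤ ⟪fderiv ℝ (gradient f) x v, v⟫) (p : E) :
    f p + ⟪gradient f p, v⟫ + m / 2 * ‖v‖ ^ 2 ≤ f (p + v) := by
  simpa [div_mul_eq_mul_div] using add_add_half_le_of_le_deriv_deriv
    (fun _ => hasDerivAt_apply_add_smul (hf _))
    (fun _ => hasDerivAt_inner_gradient_add_smul (hg _))
    fun s => hm (p + s • v)

theorem le_add_inner_gradient_add_of_hessian_le (hf : Differentiable ℝ f)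
    (hg : Differentiable ℝ (gradient f)) {M : ℝ} {v : E}
    (hM : ∀ x, ⟪fderiv ℝ (gradient f) x v, v⟫ ≤ M * ‖v‖ ^ 2) (p : E) :
    f (p + v) ≤ f p + ⟪gradient f p, v⟫ + M / 2 * ‖v‖ ^ 2 := by
  simpa [div_mul_eq_mul_div] using le_add_add_half_of_deriv_deriv_le
    (fun _ => hasDerivAt_apply_add_smul (hf _))
    (fun _ => hasDerivAt_inner_gradient_add_smul (hg _))
    fun s => hM (p + s • v)

end HessianBounds

section Descent

variable {E : Type*} [NormedAddCommGroup E] [InnerProductSpace ℝ E]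

theorem two_mul_sub_le_norm_sq_of_quadratic_lower_bound {f : E → ℝ} {p g : E} {μ : ℝ}
    (hμ : 0 ≤ μ) (h : ∀ v, f p + ⟪g, v⟫ + μ / 2 * ‖v‖ ^ 2 ≤ f (p + v)) (q : E) :
    2 * μ * (f p - f q) ≤ ‖g‖ ^ 2 := by
  have hq := h (q - p)
  rw [add_sub_cancel] at hq
  have hsq : 0 ≤ ‖g + μ • (q - p)‖ ^ 2 := sq_nonneg _
  rw [norm_add_sq_real, real_inner_smul_right, norm_smul, Real.norm_of_nonneg hμ] at hsq
  nlinarith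

theorem apply_sub_smul_le_of_quadratic_upper_bound {f : E → ℝ} {p g u : E} {L Γ Δ ε : ℝ}
    (hL : 0 ≤ L) (h : ∀ v, f (p + v) ≤ f p + ⟪g, v⟫ + L / 2 * ‖v‖ ^ 2)
    (hu : Γ * ‖g‖ ^ 2 ≤ ⟪u, g⟫) (hnorm : ‖u‖ ≤ Δ * ‖g‖) (hε : 0 ≤ ε) :
    f (p - ε • u) ≤ f p - (ε * Γ - L / 2 * Δ ^ 2 * ε ^ 2) * ‖g‖ ^ 2 := by
  have hstep := h (-(ε • u))
  rw [← sub_eq_add_neg, inner_neg_right, real_inner_smul_right, real_inner_comm, norm_neg,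
    norm_smul, Real.norm_of_nonneg hε] at hstep
  have hu2 : ‖u‖ ^ 2 ≤ Δ ^ 2 * ‖g‖ ^ 2 := by
    rw [← mul_pow]; exact pow_le_pow_left₀ (norm_nonneg u) hnorm 2
  linarith [mul_le_mul_of_nonneg_left hu hε,
    mul_le_mul_of_nonneg_left hu2 (by positivity : 0 ≤ L / 2 * ε ^ 2)]

theorem ContinuousLinearMap.norm_apply_le_of_abs_inner_self_le {T : E →L[ℝ] E}
    (hT : (T : E →ₗ[ℝ] E).IsSymmetric) {a : ℝ} (h : ∀ x, |⟪T x, x⟫| ≤ a * ‖x‖ ^ 2)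
    (x : E) : ‖T x‖ ≤ a * ‖x‖ := by
  rcases eq_or_ne x 0 with rfl | hx
  · simp
  have ha : 0 ≤ a :=
    nonneg_of_mul_nonneg_left ((abs_nonneg _).trans (h x)) (by positivity)
  refine (T.le_opNorm x).trans (mul_le_mul_of_nonneg_right ?_ (norm_nonneg x))
  rw [T.norm_eq_iSup_rayleighQuotient hT]
  refine ciSup_le fun y => ?_
  rcases eq_or_ne y 0 with rfl | hy
  · simpa using ha
  rw [rayleighQuotient, reApplyInnerSelf_apply, RCLike.re_to_real, abs_div, abs_sq,
    div_le_iff₀ (by positivity)]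
  exact h y

end Descent

namespace Matrix

variable {n : Type*} [Fintype n] [DecidableEq n] {A : Matrix n n ℝ} {a : ℝ}

theorem mul_norm_sq_le_inner_toEuclideanLin_self (h : (A - a • 1).PosSemidef)
    (w : EuclideanSpace ℝ n) : a * ‖w‖ ^ 2 ≤ ⟪toEuclideanLin A w, w⟫ := by
  have := (isPositive_toEuclideanLin_iff.mpr h).inner_nonneg_left w
  simp only [map_sub, map_smul, toLpLin_one, LinearMap.sub_apply, LinearMap.smul_apply,
    LinearMap.id_apply, inner_sub_left, real_inner_smul_left, real_inner_self_eq_norm_sq,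
    sub_nonneg] at this
  linarith

theorem inner_toEuclideanLin_self_le_mul_norm_sq (h : (a • 1 - A).PosSemidef)
    (w : EuclideanSpace ℝ n) : ⟪toEuclideanLin A w, w⟫ ≤ a * ‖w‖ ^ 2 := by
  have := (isPositive_toEuclideanLin_iff.mpr h).inner_nonneg_left w
  simp only [map_sub, map_smul, toLpLin_one, LinearMap.sub_apply, LinearMap.smul_apply,
    LinearMap.id_apply, inner_sub_left, real_inner_smul_left, real_inner_self_eq_norm_sq,
    sub_nonneg] at this
  linarith

theorem norm_toEuclideanLin_apply_le (hA : A.PosSemidef) (hAa : (a • 1 - A).PosSemidef)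
    (w : EuclideanSpace ℝ n) : ‖toEuclideanLin A w‖ ≤ a * ‖w‖ := by
  have hT := isPositive_toEuclideanLin_iff.mpr hA
  refine (toEuclideanCLM (𝕜 := ℝ) A).norm_apply_le_of_abs_inner_self_le hT.isSymmetric
    (fun x => ?_) w
  change |⟪toEuclideanLin A x, x⟫| ≤ a * ‖x‖ ^ 2
  have h0 := hT.inner_nonneg_left x
  have ha := inner_toEuclideanLin_self_le_mul_norm_sq hAa x
  exact abs_le.mpr ⟨by linarith, ha⟩

end Matrix

-- Positivity: `2Γε - LΔ²ε² ≤ Γ²/(LΔ²) ≤ 1/L < 1/μ`.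
theorem contraction_factor_pos_and_lt_one {μ L Γ Δ ε : ℝ} (hμ : 0 < μ) (hμL : μ < L)
    (hΓ : 0 < Γ) (hΓΔ : Γ ≤ Δ) (hε : 0 < ε) (hεub : ε < 2 * Γ / (L * Δ ^ 2)) :
    0 < 1 - (2 * μ * Γ * ε - μ * L * Δ ^ 2 * ε ^ 2) ∧
      1 - (2 * μ * Γ * ε - μ * L * Δ ^ 2 * ε ^ 2) < 1 := by
  have hL : 0 < L := hμ.trans hμL
  have hΔ : 0 < Δ := hΓ.trans_le hΓΔ
  have hεL : L * Δ ^ 2 * ε < 2 * Γ := by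
    rwa [lt_div_iff₀ (by positivity), mul_comm] at hεub
  constructor
  · nlinarith [mul_nonneg hμ.le (sq_nonneg (L * Δ ^ 2 * ε - Γ)), mul_pos hL (pow_pos hΔ 2),
      mul_pos (sub_pos.mpr hμL) (pow_pos hΓ 2),
      mul_nonneg hL.le (mul_nonneg (sub_nonneg.mpr hΓΔ) (by linarith : (0:ℝ) ≤ Δ + Γ))]
  · nlinarith [mul_pos (mul_pos hμ hε) (sub_pos.mpr hεL)]

theorem dbfgs_sync_strongly_convex_linear_convergence_general {d : ℕ}
    (f : EuclideanSpace ℝ (Fin d) → ℝ) (μ L : ℝ) (hμ : 0 < μ) (hμL : μ < L)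
    (hf : ContDiff ℝ 2 f)
    (hHess : ∀ x v : EuclideanSpace ℝ (Fin d),
      μ * ‖v‖ ^ 2 ≤ ⟪(fderiv ℝ (gradient f) x) v, v⟫ ∧
        ⟪(fderiv ℝ (gradient f) x) v, v⟫ ≤ L * ‖v‖ ^ 2)
    (xstar : EuclideanSpace ℝ (Fin d))
    (Γ Δ : ℝ) (hΓ : 0 < Γ) (hΓΔ : Γ ≤ Δ)
    (ε : ℝ) (hε : 0 < ε) (hεub : ε < 2 * Γ / (L * Δ ^ 2))
    (A : ℕ → Matrix (Fin d) (Fin d) ℝ)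
    (hAlow : ∀ t, (A t - Γ • 1).PosSemidef)
    (hAup : ∀ t, (Δ • (1 : Matrix (Fin d) (Fin d) ℝ) - A t).PosSemidef)
    (x : ℕ → EuclideanSpace ℝ (Fin d))
    (hx : ∀ t, x (t + 1) = x t - ε • (Matrix.toEuclideanLin (A t)) (gradient f (x t)))
    (c : ℝ) (hc : c = 1 - (2 * μ * Γ * ε - μ * L * Δ ^ 2 * ε ^ 2)) :
    0 < c ∧ c < 1 ∧
      ∀ t : ℕ, f (x t) - f xstar ≤ c ^ t * (f (x 0) - f xstar) := by
  obtain ⟨hc0, hc1⟩ := hc ▸ contraction_factor_pos_and_lt_one hμ hμL hΓ hΓΔ hε hεub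
  have hdf : Differentiable ℝ f := hf.differentiable two_ne_zero
  have hdg : Differentiable ℝ (gradient f) := hf.differentiable_gradient
  have hstep : ∀ t, f (x (t + 1)) - f xstar ≤ c * (f (x t) - f xstar) := by
    intro t
    set g := gradient f (x t)
    have hPL : 2 * μ * (f (x t) - f xstar) ≤ ‖g‖ ^ 2 :=
      two_mul_sub_le_norm_sq_of_quadratic_lower_bound hμ.le
        (fun v => add_inner_gradient_add_le_of_le_hessian hdf hdg (fun y => (hHess y v).1) _) _
    have hA : (A t).PosSemidef := by
      simpa using (hAlow t).add (Matrix.PosSemidef.one.smul hΓ.le)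
    have hdescent := apply_sub_smul_le_of_quadratic_upper_bound (hμ.trans hμL).le
      (fun v => le_add_inner_gradient_add_of_hessian_le hdf hdg (fun y => (hHess y v).2) (x t))
      (Matrix.mul_norm_sq_le_inner_toEuclideanLin_self (hAlow t) g)
      (Matrix.norm_toEuclideanLin_apply_le hA (hAup t) g) hε.le
    have hκ : 0 ≤ ε * Γ - L / 2 * Δ ^ 2 * ε ^ 2 := by
      rw [hc] at hc1
      nlinarith
    rw [hx t, hc]
    linarith [mul_le_mul_of_nonneg_left hPL hκ]
  exact ⟨hc0, hc1, fun t => le_geom (u := fun t => f (x t) - f xstar) hc0.le t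
    fun k _ => hstep k⟩

/-- Theorem 2 of the paper: linear convergence of synchronous D-BFGS
(preconditioned gradient descent with symmetric preconditioners whose eigenvalues
lie in `[Γ, Δ]`) for strongly convex objectives. -/
theorem dbfgs_sync_strongly_convex_linear_convergence {d : ℕ}
    (f : EuclideanSpace ℝ (Fin d) → ℝ) (μ L : ℝ) (hμ : 0 < μ) (hμL : μ < L)
    (hf : ContDiff ℝ 2 f)
    (hHess : ∀ x v : EuclideanSpace ℝ (Fin d),
      μ * ‖v‖ ^ 2 ≤ ⟪(fderiv ℝ (gradient f) x) v, v⟫ ∧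
        ⟪(fderiv ℝ (gradient f) x) v, v⟫ ≤ L * ‖v‖ ^ 2)
    (xstar : EuclideanSpace ℝ (Fin d)) (hxstar : ∀ z, f xstar ≤ f z)
    (Γ Δ : ℝ) (hΓ : 0 < Γ) (hΓΔ : Γ ≤ Δ)
    (ε : ℝ) (hε : 0 < ε) (hεub : ε < 2 * Γ / (L * Δ ^ 2))
    (A : ℕ → Matrix (Fin d) (Fin d) ℝ)
    (hAsymm : ∀ t, (A t).IsSymm)
    (hAlow : ∀ t, (A t - Γ • 1).PosSemidef)
    (hAup : ∀ t, (Δ • (1 : Matrix (Fin d) (Fin d) ℝ) - A t).PosSemidef)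
    (x : ℕ → EuclideanSpace ℝ (Fin d))
    (hx : ∀ t, x (t + 1) = x t - ε • (Matrix.toEuclideanLin (A t)) (gradient f (x t)))
    (c : ℝ) (hc : c = 1 - (2 * μ * Γ * ε - μ * L * Δ ^ 2 * ε ^ 2)) :
    0 < c ∧ c < 1 ∧
      ∀ t : ℕ, f (x t) - f xstar ≤ c ^ t * (f (x 0) - f xstar) :=
  dbfgs_sync_strongly_convex_linear_convergence_general f μ L hμ hμL hf hHess xstar Γ Δ hΓ hΓΔ ε hε
    hεub A hAlow hAup x hx c hc
end

section
/- Let B be a positive integer and let a, b be reals with b ≥ 0 and a > 2bB. Let (f_t)_{t≥0} be a sequence of reals bounded below by f* ∈ ℝ, and let (K_t)_{t≥0} be a sequence of nonnegative reals (with the convention K_τ = 0 for τ < 0) satisfying, for all t ≥ 0, f_{t+1} ≤ f_t − a·K_t² + b·K_t·Σ_{τ=t−B}^{t−1} K_τ. Then Σ_{τ=0}^{t} K_τ² ≤ (f_0 − f*)/(a − 2bB) for all t, so the series Σ_{t} K_t² converges, and consequently lim_{t→∞} K_t = 0. -/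
open Filter Finset

/-!
Bounding each cross term by `K_t K_τ ≤ K_t² + K_τ²` and noting that every index `τ` lies in at
most `B` of the delay windows `[t - B, t)`, the delayed terms cost at most `2bB Σ K_t²` in total.
Telescoping the recursion then gives `(a - 2bB) Σ_{t<T} K_t² ≤ f_0 - f_T ≤ f_0 - f*`.
-/

theorem sum_range_sum_Ico_sub_le {R : Type*} [CommSemiring R] [PartialOrder R] [IsOrderedRing R]
    (g : ℕ → R) (hg : ∀ n, 0 ≤ g n) (B T : ℕ) :
    ∑ t ∈ range T, ∑ τ ∈ Ico (t - B) t, g τ ≤ B * ∑ τ ∈ range T, g τ := by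
  rw [sum_comm' (t' := range T) (s' := fun τ => (range T).filter fun t => τ < t ∧ t ≤ τ + B)
    (by intro t τ; simp only [mem_range, mem_Ico, mem_filter]; omega), mul_sum]
  refine sum_le_sum fun τ _ => ?_
  have hcard : ((range T).filter fun t => τ < t ∧ t ≤ τ + B).card ≤ B := calc
    _ ≤ (Ioc τ (τ + B)).card := card_le_card fun t ht => by simp_all
    _ = B := by simp
  rw [sum_const, ← nsmul_eq_mul]
  exact nsmul_le_nsmul_left (hg τ) hcard

theorem mul_sum_le_card_mul_sq_add_sum_sq {ι R : Type*} [CommRing R] [LinearOrder R]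
    [IsStrictOrderedRing R] (x : R) (y : ι → R) (s : Finset ι) :
    x * ∑ i ∈ s, y i ≤ s.card * x ^ 2 + ∑ i ∈ s, y i ^ 2 := by
  rw [mul_sum, ← nsmul_eq_mul, ← sum_const, ← sum_add_distrib]
  exact sum_le_sum fun i _ => by nlinarith [two_mul_le_add_sq x (y i), sq_nonneg x, sq_nonneg (y i)]

theorem mul_sum_range_sq_le_sub_of_delayed_descent (B : ℕ) (a b : ℝ) (hb : 0 ≤ b) (f K : ℕ → ℝ)
    (hrec : ∀ t, f (t + 1) ≤ f t - a * K t ^ 2 + b * K t * ∑ τ ∈ Ico (t - B) t, K τ) (T : ℕ) :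
    (a - 2 * b * B) * ∑ t ∈ range T, K t ^ 2 ≤ f 0 - f T := by
  have hstep (t : ℕ) :
      (a - b * B) * K t ^ 2 - b * ∑ τ ∈ Ico (t - B) t, K τ ^ 2 ≤ f t - f (t + 1) := by
    have hcard : ((Ico (t - B) t).card : ℝ) ≤ B := by
      rw [Nat.card_Ico]; exact_mod_cast (by omega : t - (t - B) ≤ B)
    have hdelay : b * K t * ∑ τ ∈ Ico (t - B) t, K τ
        ≤ b * (B * K t ^ 2 + ∑ τ ∈ Ico (t - B) t, K τ ^ 2) := calc
      _ ≤ b * ((Ico (t - B) t).card * K t ^ 2 + ∑ τ ∈ Ico (t - B) t, K τ ^ 2) := by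
        rw [mul_assoc]; gcongr; exact mul_sum_le_card_mul_sq_add_sum_sq _ _ _
      _ ≤ b * (B * K t ^ 2 + ∑ τ ∈ Ico (t - B) t, K τ ^ 2) := by gcongr
    linarith [hrec t]
  have hwindows := sum_range_sum_Ico_sub_le (fun τ => K τ ^ 2) (fun τ => sq_nonneg (K τ)) B T
  calc (a - 2 * b * B) * ∑ t ∈ range T, K t ^ 2
      = (a - b * B) * ∑ t ∈ range T, K t ^ 2 - b * (B * ∑ t ∈ range T, K t ^ 2) := by ring
    _ ≤ (a - b * B) * ∑ t ∈ range T, K t ^ 2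
          - b * ∑ t ∈ range T, ∑ τ ∈ Ico (t - B) t, K τ ^ 2 := by gcongr
    _ = ∑ t ∈ range T, ((a - b * B) * K t ^ 2 - b * ∑ τ ∈ Ico (t - B) t, K τ ^ 2) := by
          rw [sum_sub_distrib, mul_sum, mul_sum]
    _ ≤ ∑ t ∈ range T, (f t - f (t + 1)) := sum_le_sum fun t _ => hstep t
    _ = f 0 - f T := sum_range_sub' f T

theorem tendsto_zero_of_tendsto_sq_zero {α : Type*} {l : Filter α} {u : α → ℝ}
    (h : Tendsto (fun x => u x ^ 2) l (nhds 0)) : Tendsto u l (nhds 0) := by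
  rw [tendsto_zero_iff_abs_tendsto_zero]
  simpa [Real.sqrt_sq_eq_abs, Function.comp_def] using h.sqrt

theorem async_dbfgs_gradient_summability_general
    (B : ℕ) (a b : ℝ) (hb : 0 ≤ b) (ha : 2 * b * B < a)
    (f : ℕ → ℝ) (fstar : ℝ) (hlb : ∀ t, fstar ≤ f t)
    (K : ℕ → ℝ)
    (hrec : ∀ t, f (t + 1) ≤ f t - a * (K t) ^ 2
      + b * K t * ∑ τ ∈ Finset.Ico (t - B) t, K τ) :
    (∀ t : ℕ, ∑ τ ∈ Finset.range (t + 1), (K τ) ^ 2 ≤ (f 0 - fstar) / (a - 2 * b * B)) ∧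
      Summable (fun t => (K t) ^ 2) ∧
      Tendsto K atTop (nhds 0) := by
  have hpartial (T : ℕ) : ∑ t ∈ range T, K t ^ 2 ≤ (f 0 - fstar) / (a - 2 * b * B) := by
    rw [le_div_iff₀ (by linarith), mul_comm]
    linarith [mul_sum_range_sq_le_sub_of_delayed_descent B a b hb f K hrec T, hlb T]
  have hsummable := summable_of_sum_range_le (fun t => sq_nonneg (K t)) hpartial
  exact ⟨fun t => hpartial (t + 1), hsummable,
    tendsto_zero_of_tendsto_sq_zero hsummable.tendsto_atTop_zero⟩

/-- Core summability argument in the proof of Theorem 3 of the paper (convergence of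
asynchronous D-BFGS): if `f` is bounded below by `f*` and
`f_{t+1} ≤ f_t − a K_t² + b K_t Σ_{τ=t−B}^{t−1} K_τ` with `a > 2bB`, then the partial
sums `Σ_{τ=0}^t K_τ²` are bounded by `(f_0 − f*)/(a − 2bB)`, the series `Σ K_t²`
converges, and `K_t → 0`. -/
theorem async_dbfgs_gradient_summability
    (B : ℕ) (hB : 0 < B) (a b : ℝ) (hb : 0 ≤ b) (ha : 2 * b * B < a)
    (f : ℕ → ℝ) (fstar : ℝ) (hlb : ∀ t, fstar ≤ f t)
    (K : ℕ → ℝ) (hK : ∀ t, 0 ≤ K t)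
    (hrec : ∀ t, f (t + 1) ≤ f t - a * (K t) ^ 2
      + b * K t * ∑ τ ∈ Finset.Ico (t - B) t, K τ) :
    (∀ t : ℕ, ∑ τ ∈ Finset.range (t + 1), (K τ) ^ 2 ≤ (f 0 - fstar) / (a - 2 * b * B)) ∧
      Summable (fun t => (K t) ^ 2) ∧
      Tendsto K atTop (nhds 0) :=
  async_dbfgs_gradient_summability_general B a b hb ha f fstar hlb K hrec
end

section
/- Let (V(t))_{t≥0} be a sequence of nonnegative reals, let p, q > 0 with p + q < 1, and let d : ℕ → ℕ satisfy 0 ≤ d(t) ≤ d_max for some constant d_max > 0. If V(t+1) ≤ p·V(t) + q·max_{max(0, t−d(t)) ≤ l ≤ t} V(l) for all t ≥ 0, then V(t) ≤ (p+q)^{t/(1+d_max)}·V(0) for all t ≥ 0; in particular V(t) converges to zero at a linear rate. -/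
/-!
Compare `V` with the candidate bound `W t = ρ ^ (t / (1 + d_max)) V(0)`, `ρ = p + q`.
Since `W` is nonincreasing, every term of the delayed window `[t - d(t), t]` is at most
`W (t - d_max)` by strong induction, so the recursion gives `V(t+1) ≤ ρ W(t - d_max)`. The
factor `ρ` adds `1 = (1 + d_max) / (1 + d_max)` to the exponent of `W`, exactly the `d_max + 1`
steps from `t - d_max` to `t + 1`.
-/

section DelayedRecursion

variable {V W : ℕ → ℝ} {p q : ℝ} {dmax : ℕ} {d : ℕ → ℕ}

theorem le_of_delayed_recursion (hp : 0 ≤ p) (hq : 0 ≤ q) (hd : ∀ t, d t ≤ dmax)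
    (hrec : ∀ t, V (t + 1) ≤ p * V t +
      q * (Finset.Icc (t - d t) t).sup' (Finset.nonempty_Icc.mpr (Nat.sub_le t (d t))) V)
    (hW : Antitone W) (hW0 : V 0 ≤ W 0) (hWrec : ∀ t, (p + q) * W (t - dmax) ≤ W (t + 1)) :
    ∀ t, V t ≤ W t := by
  intro t
  induction t using Nat.strong_induction_on with
  | _ t ih =>
    cases t with
    | zero => exact hW0
    | succ t =>
      have hwindow : ∀ l ≤ t, t - dmax ≤ l → V l ≤ W (t - dmax) := fun l hlt hl =>
        (ih l (Nat.lt_succ_of_le hlt)).trans (hW hl)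
      have hsup : (Finset.Icc (t - d t) t).sup'
          (Finset.nonempty_Icc.mpr (Nat.sub_le t (d t))) V ≤ W (t - dmax) :=
        Finset.sup'_le _ _ fun l hl => by
          obtain ⟨hl₁, hl₂⟩ := Finset.mem_Icc.mp hl
          exact hwindow l hl₂ (le_trans (Nat.sub_le_sub_left (hd t) t) hl₁)
      have hcur : V t ≤ W (t - dmax) := hwindow t le_rfl (Nat.sub_le t dmax)
      calc V (t + 1) ≤ p * W (t - dmax) + q * W (t - dmax) :=
            (hrec t).trans (add_le_add (mul_le_mul_of_nonneg_left hcur hp)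
              (mul_le_mul_of_nonneg_left hsup hq))
        _ = (p + q) * W (t - dmax) := by ring
        _ ≤ W (t + 1) := hWrec t

end DelayedRecursion

section GeometricBound

variable {ρ : ℝ}

theorem antitone_rpow_natCast_div (hρ₀ : 0 < ρ) (hρ₁ : ρ ≤ 1) {c : ℝ} (hc : 0 ≤ c) :
    Antitone fun t : ℕ => ρ ^ ((t : ℝ) / c) := fun _ _ hst =>
  Real.rpow_le_rpow_of_exponent_ge hρ₀ hρ₁
    (div_le_div_of_nonneg_right (Nat.cast_le.mpr hst) hc)

theorem mul_rpow_natCast_sub_div_le (hρ₀ : 0 < ρ) (hρ₁ : ρ ≤ 1) (t m : ℕ) :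
    ρ * ρ ^ (((t - m : ℕ) : ℝ) / (1 + m)) ≤ ρ ^ (((t + 1 : ℕ) : ℝ) / (1 + m)) := by
  have hc : (0 : ℝ) < 1 + m := by positivity
  -- truncation only makes `t - m` larger, and `(t - m) / (1 + m) + 1 = (t + 1) / (1 + m)`
  have hexp : ((t + 1 : ℕ) : ℝ) / (1 + m) ≤ ((t - m : ℕ) : ℝ) / (1 + m) + 1 := by
    rw [div_add_one hc.ne', div_le_div_iff_of_pos_right hc]
    push_cast
    have htrunc : (t : ℝ) ≤ ((t - m : ℕ) : ℝ) + m := by exact_mod_cast le_tsub_add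
    linarith
  calc ρ * ρ ^ (((t - m : ℕ) : ℝ) / (1 + m))
      = ρ ^ (((t - m : ℕ) : ℝ) / (1 + m) + 1) := by
        rw [Real.rpow_add hρ₀, Real.rpow_one, mul_comm]
    _ ≤ ρ ^ (((t + 1 : ℕ) : ℝ) / (1 + m)) := Real.rpow_le_rpow_of_exponent_ge hρ₀ hρ₁ hexp

end GeometricBound

theorem delayed_linear_recursion_linear_rate_general
    (V : ℕ → ℝ) (hV : ∀ t, 0 ≤ V t)
    (p q : ℝ) (hp : 0 < p) (hq : 0 < q) (hpq : p + q < 1)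
    (dmax : ℕ)
    (d : ℕ → ℕ) (hd : ∀ t, d t ≤ dmax)
    (hrec : ∀ t, V (t + 1) ≤ p * V t +
      q * (Finset.Icc (t - d t) t).sup' (Finset.nonempty_Icc.mpr (Nat.sub_le t (d t))) V) :
    ∀ t : ℕ, V t ≤ (p + q) ^ ((t : ℝ) / (1 + (dmax : ℝ))) * V 0 := by
  have hρ₀ : 0 < p + q := add_pos hp hq
  refine le_of_delayed_recursion hp.le hq.le hd hrec ?_ (by simp) fun t => ?_
  · exact (antitone_rpow_natCast_div hρ₀ hpq.le (by positivity)).mul_const (hV 0)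
  · rw [← mul_assoc]
    exact mul_le_mul_of_nonneg_right (mul_rpow_natCast_sub_div_le hρ₀ hpq.le t dmax) (hV 0)

/-- Lemma on delayed linear recursions (Lemma 4 of the paper, Appendix E): a nonnegative
sequence satisfying `V(t+1) ≤ p V(t) + q max_{t−d(t) ≤ l ≤ t} V(l)` with `p + q < 1` and
bounded delays `d(t) ≤ d_max` converges linearly:
`V(t) ≤ (p+q)^{t/(1+d_max)} V(0)`. -/
theorem delayed_linear_recursion_linear_rate
    (V : ℕ → ℝ) (hV : ∀ t, 0 ≤ V t)
    (p q : ℝ) (hp : 0 < p) (hq : 0 < q) (hpq : p + q < 1)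
    (dmax : ℕ) (hdmax : 0 < dmax)
    (d : ℕ → ℕ) (hd : ∀ t, d t ≤ dmax)
    (hrec : ∀ t, V (t + 1) ≤ p * V t +
      q * (Finset.Icc (t - d t) t).sup' (Finset.nonempty_Icc.mpr (Nat.sub_le t (d t))) V) :
    ∀ t : ℕ, V t ≤ (p + q) ^ ((t : ℝ) / (1 + (dmax : ℝ))) * V 0 :=
  delayed_linear_recursion_linear_rate_general V hV p q hp hq hpq dmax d hd hrec
end
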